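/- Let G act line-transitively on a non-trivial finite regular linear space S which is not a projective plane, and let α be a point. Then the stabilizer G_α is self-normalizing in G: N_G(G_α) = G_α. -/

import Mathlib

open Pointwise

structure LinearSpace (P : Type*) [DecidableEq P] where
  lines : Finset (Finset P)
  exists_unique_line : ∀ a b : P, a ≠ b → ∃! L, L ∈ lines ∧ a ∈ L ∧ b ∈ L

namespace LinearSpace

variable {P : Type*} [DecidableEq P]

/-- Non-trivial: every line has at least 3 points and there are at least two lines. -/
def Nontrivial (S : LinearSpace P) : Prop :=
  (∀ L ∈ S.lines, 3 ≤ L.card) ∧ 2 ≤ S.lines.card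

/-- Regular with line size `k` and `r` lines per point. -/
def Regular [Fintype P] (S : LinearSpace P) (k r : ℕ) : Prop :=
  (∀ L ∈ S.lines, L.card = k) ∧ ∀ a : P, (S.lines.filter fun L => a ∈ L).card = r

/-- `G` acts as automorphisms of `S`, transitively on the set of lines. -/
def LineTrans (G : Type*) [Group G] [MulAction G P] (S : LinearSpace P) : Prop :=
  (∀ (g : G), ∀ L ∈ S.lines, g • L ∈ S.lines) ∧
    ∀ L₁ ∈ S.lines, ∀ L₂ ∈ S.lines, ∃ g : G, g • L₁ = L₂

end LinearSpace

/-!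
Since `b > v` and `b ∣ v (v - 1)`, some prime `t` divides both `b` and `v - 1`. A Sylow
`t`-subgroup `T` fixes no line, because `t` divides the index `b` of a line stabilizer; hence it
fixes at most one point, as two fixed points would fix the line joining them. As `v ≡ 1 mod t`,
`T` does fix a point, and by point-transitivity (Block's lemma) we may take `T ≤ G_α`. Then `α` is
the only point fixed by `G_α`, while every `g` normalizing `G_α` makes `G_α` fix `g • α`.
-/

open Finset MulAction

theorem Nat.exists_prime_dvd_of_dvd_mul_of_lt {b v w : ℕ} (hv : 0 < v) (h : b ∣ v * w)
    (hvb : v < b) : ∃ p, p.Prime ∧ p ∣ b ∧ p ∣ w := by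
  by_contra! hcop
  have hbv : b ∣ v := (Nat.coprime_of_dvd hcop).dvd_of_dvd_mul_right h
  exact (Nat.le_of_dvd hv hbv).not_gt hvb

theorem MulAction.normalizer_stabilizer_eq_self {G X : Type*} [Group G] [MulAction G X] {α : X}
    (h : ∀ β : X, stabilizer G α ≤ stabilizer G β → β = α) :
    Subgroup.normalizer (stabilizer G α : Set G) = stabilizer G α := by
  refine le_antisymm (fun g hg => h (g • α) fun s hs => ?_) Subgroup.le_normalizer
  have hconj : g⁻¹ * s * g ∈ stabilizer G α :=
    (Subgroup.mem_normalizer_iff'' (H := stabilizer G α)).mp hg s |>.mp hs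
  calc s • g • α = g • (g⁻¹ * s * g) • α := by
        simp only [smul_smul, mul_assoc, mul_inv_cancel_left]
    _ = g • α := by rw [mem_stabilizer_iff.mp hconj]

theorem Sylow.exists_le_stabilizer {G X : Type*} [Group G] [MulAction G X] [Finite G] [Finite X]
    [IsPretransitive G X] {t : ℕ} [Fact t.Prime] (ht : Nat.card X ≡ 1 [MOD t]) (α : X) :
    ∃ T : Sylow t G, (T : Subgroup G) ≤ stabilizer G α := by
  obtain ⟨T₀⟩ : Nonempty (Sylow t G) := inferInstance
  have hfix : Nat.card (fixedPoints T₀ X) ≡ 1 [MOD t] :=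
    (T₀.2.card_modEq_card_fixedPoints X).symm.trans ht
  obtain ⟨⟨β, hβ⟩⟩ : Nonempty (fixedPoints T₀ X) := by
    refine (Nat.card_ne_zero.mp fun h0 => ?_).1
    rw [h0] at hfix
    exact (Fact.out : t.Prime).ne_one (Nat.dvd_one.mp (Nat.modEq_zero_iff_dvd.mp hfix.symm))
  obtain ⟨g, rfl⟩ := exists_smul_eq G β α
  refine ⟨g • T₀, ?_⟩
  rw [Sylow.coe_subgroup_smul, stabilizer_smul_eq_stabilizer_map_conj, Subgroup.pointwise_smul_def]
  exact Subgroup.map_mono fun s hs => hβ ⟨s, hs⟩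

namespace LinearSpace

variable {P : Type*} [DecidableEq P] (S : LinearSpace P) {k r : ℕ}

def linesThrough (x : P) : Finset (Finset P) :=
  S.lines.filter fun L => x ∈ L

theorem mem_linesThrough {x : P} {L : Finset P} : L ∈ S.linesThrough x ↔ L ∈ S.lines ∧ x ∈ L :=
  mem_filter

theorem eq_of_mem_of_mem {a b : P} (hab : a ≠ b) {L M : Finset P} (hL : L ∈ S.lines)
    (hM : M ∈ S.lines) (haL : a ∈ L) (hbL : b ∈ L) (haM : a ∈ M) (hbM : b ∈ M) : L = M :=
  (S.exists_unique_line a b hab).unique ⟨hL, haL, hbL⟩ ⟨hM, haM, hbM⟩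

theorem card_inter_le_one {L M : Finset P} (hL : L ∈ S.lines) (hM : M ∈ S.lines) (hLM : L ≠ M) :
    #(L ∩ M) ≤ 1 :=
  card_le_one.mpr fun a ha b hb => by
    by_contra hab
    rw [mem_inter] at ha hb
    exact hLM (S.eq_of_mem_of_mem hab hL hM ha.1 hb.1 ha.2 hb.2)

theorem sum_card_inter_linesThrough {x : P} {A : Finset P} (hx : x ∉ A) :
    ∑ L ∈ S.linesThrough x, #(L ∩ A) = #A := by
  rw [← card_biUnion]
  · congr 1
    ext a
    simp only [mem_biUnion, mem_inter, mem_linesThrough]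
    refine ⟨fun ⟨_, _, _, ha⟩ => ha, fun ha => ?_⟩
    obtain ⟨L, ⟨hL, hxL, haL⟩, -⟩ := S.exists_unique_line x a (ne_of_mem_of_not_mem ha hx).symm
    exact ⟨L, ⟨hL, hxL⟩, haL, ha⟩
  · intro L hL M hM hLM
    rw [mem_coe, mem_linesThrough] at hL hM
    refine disjoint_left.mpr fun a haL haM => hLM ?_
    rw [mem_inter] at haL haM
    exact S.eq_of_mem_of_mem (ne_of_mem_of_not_mem haL.2 hx).symm hL.1 hM.1 hL.2 haL.1 hM.2 haM.1

theorem card_le_card_linesThrough {x : P} {L : Finset P} (hL : L ∈ S.lines) (hx : x ∉ L) :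
    #L ≤ #(S.linesThrough x) := by
  rw [← S.sum_card_inter_linesThrough hx, card_eq_sum_ones]
  refine sum_le_sum fun M hM => S.card_inter_le_one (S.mem_linesThrough.mp hM).1 hL ?_
  rintro rfl
  exact hx (S.mem_linesThrough.mp hM).2

theorem Nontrivial.exists_not_mem {S : LinearSpace P} (hnt : S.Nontrivial) {L : Finset P}
    (hL : L ∈ S.lines) : ∃ x, x ∉ L := by
  obtain ⟨M, hM, hML⟩ := exists_mem_ne hnt.2 L
  obtain ⟨a, ha, b, hb, hab⟩ := one_lt_card.mp (lt_of_lt_of_le (by norm_num) (hnt.1 M hM))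
  by_contra! hall
  exact hML (S.eq_of_mem_of_mem hab hM hL ha hb (hall a) (hall b))

section Regular

variable [Fintype P] {S}

theorem Regular.card_linesThrough (hreg : S.Regular k r) (x : P) : #(S.linesThrough x) = r :=
  hreg.2 x

theorem Regular.r_mul_k_sub_one (hreg : S.Regular k r) (x : P) :
    r * (k - 1) = Fintype.card P - 1 := by
  have hx := S.sum_card_inter_linesThrough (notMem_erase x univ)
  rw [card_erase_of_mem (mem_univ x), card_univ] at hx
  rw [← hx, sum_congr rfl fun L hL => ?_, sum_const, hreg.card_linesThrough, smul_eq_mul]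
  rw [S.mem_linesThrough] at hL
  rw [inter_erase, inter_univ, card_erase_of_mem hL.2, hreg.1 L hL.1]

theorem Regular.card_lines_mul_k (hreg : S.Regular k r) :
    #S.lines * k = Fintype.card P * r := by
  have hflags := sum_card_bipartiteAbove_eq_sum_card_bipartiteBelow (s := S.lines)
    (t := (univ : Finset P)) (r := fun L x => x ∈ L)
  simp only [bipartiteAbove, bipartiteBelow, filter_mem_eq_inter, univ_inter] at hflags
  rw [sum_congr rfl hreg.1, sum_congr rfl fun x _ => hreg.2 x, sum_const, sum_const,
    card_univ, smul_eq_mul, smul_eq_mul] at hflags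
  exact hflags

theorem Regular.three_le_k (hnt : S.Nontrivial) (hreg : S.Regular k r) : 3 ≤ k := by
  obtain ⟨L, hL⟩ := card_pos.mp (lt_of_lt_of_le (by norm_num) hnt.2)
  exact hreg.1 L hL ▸ hnt.1 L hL

theorem Regular.k_le_r (hnt : S.Nontrivial) (hreg : S.Regular k r) : k ≤ r := by
  obtain ⟨L, hL⟩ := card_pos.mp (lt_of_lt_of_le (by norm_num) hnt.2)
  obtain ⟨x, hx⟩ := hnt.exists_not_mem hL
  rw [← hreg.1 L hL, ← hreg.card_linesThrough x]
  exact S.card_le_card_linesThrough hL hx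

theorem Regular.exists_prime_dvd_card_lines (hnt : S.Nontrivial) (hreg : S.Regular k r)
    (hnpp : #S.lines ≠ Fintype.card P) :
    ∃ t, t.Prime ∧ t ∣ #S.lines ∧ Fintype.card P ≡ 1 [MOD t] := by
  obtain ⟨L, hL⟩ := card_pos.mp (lt_of_lt_of_le (by norm_num) hnt.2)
  obtain ⟨x, -⟩ := hnt.exists_not_mem hL
  have hv : 0 < Fintype.card P := Fintype.card_pos_iff.mpr ⟨x⟩
  have hk := hreg.three_le_k hnt
  have hbk := hreg.card_lines_mul_k
  have hvb : Fintype.card P < #S.lines := by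
    refine lt_of_le_of_ne (Nat.le_of_mul_le_mul_right ?_ (by omega : 0 < k)) hnpp.symm
    rw [hbk]
    exact Nat.mul_le_mul_left _ (hreg.k_le_r hnt)
  have hdvd : #S.lines ∣ Fintype.card P * (Fintype.card P - 1) :=
    ⟨k * (k - 1), by rw [← hreg.r_mul_k_sub_one x, ← mul_assoc, ← hbk, mul_assoc]⟩
  obtain ⟨t, ht, htb, htv⟩ := Nat.exists_prime_dvd_of_dvd_mul_of_lt hv hdvd hvb
  exact ⟨t, ht, htb, ((Nat.modEq_iff_dvd' hv).mpr htv).symm⟩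

end Regular

section Action

variable {S} {G : Type*} [Group G] [MulAction G P]

theorem LineTrans.orbit_eq (hlt : S.LineTrans G) {L : Finset P} (hL : L ∈ S.lines) :
    orbit G L = S.lines := by
  ext M
  refine ⟨?_, fun hM => hlt.2 L hL M hM⟩
  rintro ⟨g, rfl⟩
  exact hlt.1 g L hL

theorem LineTrans.index_stabilizer (hlt : S.LineTrans G) {L : Finset P} (hL : L ∈ S.lines) :
    (stabilizer G L).index = #S.lines := by
  rw [MulAction.index_stabilizer, hlt.orbit_eq hL, Set.ncard_coe_finset]

theorem LineTrans.stabilizer_inf_stabilizer_le (hlt : S.LineTrans G) {a b : P} (hab : a ≠ b)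
    {L : Finset P} (hL : L ∈ S.lines) (ha : a ∈ L) (hb : b ∈ L) :
    stabilizer G a ⊓ stabilizer G b ≤ stabilizer G L := by
  intro g hg
  obtain ⟨hga, hgb⟩ := Subgroup.mem_inf.mp hg
  rw [mem_stabilizer_iff] at hga hgb
  have hgaL := smul_mem_smul_finset (a := g) ha
  have hgbL := smul_mem_smul_finset (a := g) hb
  rw [hga] at hgaL
  rw [hgb] at hgbL
  exact S.eq_of_mem_of_mem hab (hlt.1 g L hL) hL hgaL hgbL ha hb

theorem LineTrans.eq_of_sylow_le_stabilizer [Finite G] (hlt : S.LineTrans G) {t : ℕ}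
    [Fact t.Prime] (ht : t ∣ #S.lines) (T : Sylow t G) {β γ : P}
    (hβ : (T : Subgroup G) ≤ stabilizer G β) (hγ : (T : Subgroup G) ≤ stabilizer G γ) :
    β = γ := by
  by_contra hne
  obtain ⟨L, ⟨hL, hβL, hγL⟩, -⟩ := S.exists_unique_line β γ hne
  have hTL := (le_inf hβ hγ).trans (hlt.stabilizer_inf_stabilizer_le hne hL hβL hγL)
  rw [← hlt.index_stabilizer hL] at ht
  exact T.not_dvd_index (ht.trans (Subgroup.index_dvd_of_le hTL))

theorem LineTrans.card_inter_eq (hlt : S.LineTrans G) {A : Finset P} (hA : ∀ g : G, g • A = A)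
    {L M : Finset P} (hL : L ∈ S.lines) (hM : M ∈ S.lines) : #(M ∩ A) = #(L ∩ A) := by
  obtain ⟨g, rfl⟩ := hlt.2 L hL M hM
  conv_lhs => rw [← hA g]
  rw [← smul_finset_inter, card_smul_finset]

-- If the orbit `A` of `y` missed `x`, every line would meet `A` in the same number `c` of points,
-- and counting `A` along the lines through `x` and through `y` would give `r c = |A|` and
-- `r (c - 1) = |A| - 1`, i.e. `r = 1`.
theorem LineTrans.isPretransitive [Fintype P] (hlt : S.LineTrans G) (hreg : S.Regular k r)
    (hr : 2 ≤ r) : IsPretransitive G P := by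
  classical
  refine ⟨fun y x => ?_⟩
  by_contra! hx
  set A := univ.filter (· ∈ orbit G y)
  have hA : ∀ g : G, g • A = A := fun g => by
    ext a
    simp [A, ← inv_smul_mem_iff, ← orbit_eq_iff, orbit_smul]
  have hyA : y ∈ A := by simp [A, mem_orbit_self]
  have hxA : x ∉ A := by simpa [A, mem_orbit_iff] using hx
  obtain ⟨L, hL⟩ : (S.linesThrough y).Nonempty :=
    card_pos.mp (by rw [hreg.card_linesThrough]; omega)
  rw [mem_linesThrough] at hL
  have hcx : r * #(L ∩ A) = #A := by
    rw [← S.sum_card_inter_linesThrough hxA, sum_congr rfl fun M hM =>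
      hlt.card_inter_eq hA hL.1 (S.mem_linesThrough.mp hM).1, sum_const,
      hreg.card_linesThrough, smul_eq_mul]
  have hcy : r * (#(L ∩ A) - 1) = #A - 1 := by
    rw [← card_erase_of_mem hyA, ← S.sum_card_inter_linesThrough (notMem_erase y A),
      sum_congr rfl fun M hM => ?_, sum_const, hreg.card_linesThrough, smul_eq_mul]
    rw [mem_linesThrough] at hM
    rw [inter_erase, card_erase_of_mem (mem_inter.mpr ⟨hM.2, hyA⟩),
      hlt.card_inter_eq hA hL.1 hM.1]
  have hc : 1 ≤ #(L ∩ A) := card_pos.mpr ⟨y, mem_inter.mpr ⟨hL.2, hyA⟩⟩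
  have hsplit : r * #(L ∩ A) = r * (#(L ∩ A) - 1) + r := by
    rw [← Nat.mul_succ, Nat.succ_eq_add_one, Nat.sub_add_cancel hc]
  omega

end Action

end LinearSpace

theorem stmt9 {P G : Type*} [Fintype P] [DecidableEq P] [Group G] [MulAction G P]
    [Finite G]
    (S : LinearSpace P) (v b k r : ℕ) (hv : v = Fintype.card P) (hb : b = S.lines.card)
    (hnt : S.Nontrivial) (hreg : S.Regular k r) (hlt : S.LineTrans G)
    (hnpp : b ≠ v) (α : P) :
    Subgroup.normalizer (MulAction.stabilizer G α : Set G) = MulAction.stabilizer G α := by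
  subst hv hb
  obtain ⟨t, ht, htb, htv⟩ := hreg.exists_prime_dvd_card_lines hnt hnpp
  have : Fact t.Prime := ⟨ht⟩
  have hk := hreg.three_le_k hnt
  have hkr := hreg.k_le_r hnt
  have : IsPretransitive G P := hlt.isPretransitive hreg (by omega)
  obtain ⟨T, hT⟩ := Sylow.exists_le_stabilizer (G := G) (by rwa [Nat.card_eq_fintype_card]) α
  exact normalizer_stabilizer_eq_self fun β hβ =>
    hlt.eq_of_sylow_le_stabilizer htb T (hT.trans hβ) hT
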